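/- Let p be a prime, n ≥ 2 and 1 ≤ i ≤ n, set j = j_n(i) = ⌈log_p(n/i)⌉, and let U = U_i(Z/p^{j+1}) be the group of unitriangular (i+1)×(i+1) matrices over Z/p^{j+1}. Then the p-Zassenhaus subgroup U_{(n,p)} equals I + p^{j}·(Z/p^{j+1})·E_{1,i+1} (a group isomorphic to Z/p) if and only if i belongs to J(n) = { ⌈n/p^k⌉ : k ≥ 0 } ∩ [1,n]. -/

import Mathlib

variable (R : Type*) [CommRing R] (m : ℕ)

/-- A square matrix is unitriangular if it is upper triangular with all diagonal entries `1`. -/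
def IsUnitriangular (M : Matrix (Fin m) (Fin m) R) : Prop :=
  (∀ k, M k k = 1) ∧ ∀ k l : Fin m, l < k → M k l = 0

/-- The group of unitriangular `m × m` matrices over `R`, as a subgroup of the units of the
matrix ring. -/
def UT : Subgroup (Matrix (Fin m) (Fin m) R)ˣ where
  carrier := {M | IsUnitriangular R m (M : Matrix (Fin m) (Fin m) R)}
  one_mem' := by
    constructor
    · intro k; simp [Matrix.one_apply]
    · intro k l h; simp [Matrix.one_apply, (ne_of_lt h).symm]
  mul_mem' := by
    rintro A B ⟨hA1, hA2⟩ ⟨hB1, hB2⟩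
    constructor
    · intro k
      rw [Units.val_mul, Matrix.mul_apply]
      rw [Finset.sum_eq_single k]
      · rw [hA1, hB1, one_mul]
      · intro j _ hj
        rcases lt_or_gt_of_ne hj with h | h
        · rw [hA2 _ _ h, zero_mul]
        · rw [hB2 _ _ h, mul_zero]
      · intro h; exact absurd (Finset.mem_univ k) h
    · intro k l hlk
      rw [Units.val_mul, Matrix.mul_apply]
      apply Finset.sum_eq_zero
      intro j _
      rcases lt_or_ge (j : Fin m) k with h | h
      · rw [hA2 _ _ h, zero_mul]
      · rw [hB2 _ _ (lt_of_lt_of_le hlk h), mul_zero]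
  inv_mem' := by
    rintro A ⟨hA1, hA2⟩
    have hcoe : ((A⁻¹ : (Matrix (Fin m) (Fin m) R)ˣ) : Matrix (Fin m) (Fin m) R) =
        ((A : Matrix (Fin m) (Fin m) R))⁻¹ := Matrix.coe_units_inv A
    haveI : Invertible (A : Matrix (Fin m) (Fin m) R) := A.invertible
    have hBT : Matrix.BlockTriangular (A : Matrix (Fin m) (Fin m) R) id :=
      fun k l h => hA2 k l h
    have hBTinv : Matrix.BlockTriangular ((A : Matrix (Fin m) (Fin m) R))⁻¹ id :=
      Matrix.blockTriangular_inv_of_blockTriangular hBT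
    constructor
    · intro k
      have hmul := congrFun (congrFun
        (Matrix.mul_inv_of_invertible (A : Matrix (Fin m) (Fin m) R)) k) k
      rw [Matrix.mul_apply] at hmul
      rw [Finset.sum_eq_single k] at hmul
      · rw [hA1] at hmul
        rw [hcoe]
        simpa using hmul
      · intro j _ hj
        rcases lt_or_gt_of_ne hj with h | h
        · rw [hA2 _ _ h, zero_mul]
        · rw [hBTinv (show id k < id j from h), mul_zero]
      · intro hmem; exact absurd (Finset.mem_univ k) hmem
    · intro k l h
      rw [hcoe]
      exact hBTinv h

/-- The subgroup `U^{(i')}` of the unitriangular group, consisting of the matrices whose entries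
on the first `i' - 1` diagonals above the main diagonal all vanish. -/
def UTk (i' : ℕ) : Subgroup ↥(UT R m) where
  carrier := {M | ∀ k l : Fin m, (k : ℕ) < l → (l : ℕ) < k + i' →
    ((M : (Matrix (Fin m) (Fin m) R)ˣ) : Matrix (Fin m) (Fin m) R) k l = 0}
  one_mem' := by
    intro k l h1 h2
    have hkl : k ≠ l := fun h => by simp [h] at h1
    simp [Matrix.one_apply, hkl]
  mul_mem' := by
    rintro A B hA hB k l hkl hli
    have hAut := A.2
    have hBut := B.2
    show ((↑A * ↑B : (Matrix (Fin m) (Fin m) R)ˣ) : Matrix (Fin m) (Fin m) R) k l = 0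
    rw [Units.val_mul, Matrix.mul_apply]
    apply Finset.sum_eq_zero
    intro j _
    rcases lt_trichotomy (j : ℕ) (k : ℕ) with h | h | h
    · rw [hAut.2 k j (Fin.lt_def.mpr h), zero_mul]
    · have hj : j = k := Fin.ext h
      subst hj
      rw [hB j l hkl hli, mul_zero]
    · rcases lt_or_ge (l : ℕ) (j : ℕ) with h' | h'
      · rw [hBut.2 j l (Fin.lt_def.mpr h'), mul_zero]
      · rw [hA k j h (lt_of_le_of_lt h' hli), zero_mul]
  inv_mem' := by
    rintro A hA k l hkl hli
    have hAut := A.2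
    have hinv := (A⁻¹).2
    have hone : ((↑A : (Matrix (Fin m) (Fin m) R)ˣ) : Matrix (Fin m) (Fin m) R) *
        ((↑A⁻¹ : (Matrix (Fin m) (Fin m) R)ˣ) : Matrix (Fin m) (Fin m) R) = 1 := by
      rw [← Units.val_mul]
      norm_cast
      rw [mul_inv_cancel]
      rfl
    have hentry := congrFun (congrFun hone k) l
    rw [Matrix.mul_apply] at hentry
    rw [Finset.sum_eq_single k] at hentry
    · have hkl' : k ≠ l := fun h => by simp [h] at hkl
      rw [hAut.1] at hentry
      rw [Matrix.one_apply_ne hkl'] at hentry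
      simpa using hentry
    · intro j _ hj
      rcases lt_trichotomy (j : ℕ) (k : ℕ) with h | h | h
      · rw [hAut.2 k j (Fin.lt_def.mpr h), zero_mul]
      · exact absurd (Fin.ext h) hj
      · rcases lt_or_ge (j : ℕ) ((k : ℕ) + i') with h' | h'
        · rw [hA k j h h', zero_mul]
        · rw [hinv.2 j l (Fin.lt_def.mpr (lt_of_lt_of_le hli h')), mul_zero]
    · intro hmem; exact absurd (Finset.mem_univ k) hmem

/-- The subgroup generated by the `q`-th powers of the elements of a subgroup. -/
def pPow {G : Type*} [Group G] (K : Subgroup G) (q : ℕ) : Subgroup G :=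
  Subgroup.closure {x | ∃ y ∈ K, x = y ^ q}

/-- An auxiliary product identity for corner matrices. -/

theorem corner_mul (p j i : ℕ) (R : Type*) [CommRing R] (hi : 0 < i) (a b : R) :
    (1 + Matrix.single (0 : Fin (i+1)) (Fin.last i) ((p : R) ^ j * a)) *
      (1 + Matrix.single (0 : Fin (i+1)) (Fin.last i) ((p : R) ^ j * b)) =
    1 + Matrix.single (0 : Fin (i+1)) (Fin.last i) ((p : R) ^ j * (a + b)) := by
  have hne : Fin.last i ≠ (0 : Fin (i+1)) := by simp [Fin.ext_iff, Fin.last]; omega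
  rw [mul_add, add_mul, add_mul, one_mul, mul_one, one_mul,
    Matrix.single_mul_single_of_ne (h := hne), mul_add, Matrix.single_add]
  abel


/-- The subgroup `I + p^j (ℤ/p^{j+1}) E_{1,i+1}` of the unitriangular `(i+1) × (i+1)` matrices
over `ℤ/p^{j+1}`: matrices differing from the identity only at the upper-right corner entry,
by a multiple of `p^j`. -/
def cornerSub (p j i : ℕ) : Subgroup ↥(UT (ZMod (p ^ (j + 1))) (i + 1)) where
  carrier := {M | ∃ a : ZMod (p ^ (j + 1)),
    ((M : (Matrix (Fin (i + 1)) (Fin (i + 1)) (ZMod (p ^ (j + 1))))ˣ) :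
        Matrix (Fin (i + 1)) (Fin (i + 1)) (ZMod (p ^ (j + 1)))) =
      1 + Matrix.single 0 (Fin.last i) ((p : ZMod (p ^ (j + 1))) ^ j * a)}
  one_mem' := ⟨0, by simp⟩
  mul_mem' := by
    rintro A B ⟨a, ha⟩ ⟨b, hb⟩
    refine ⟨a + b, ?_⟩
    have hAB : ((↑(A * B) : (Matrix (Fin (i + 1)) (Fin (i + 1)) (ZMod (p ^ (j + 1))))ˣ) :
        Matrix (Fin (i + 1)) (Fin (i + 1)) (ZMod (p ^ (j + 1)))) =
        ((↑A : (Matrix (Fin (i + 1)) (Fin (i + 1)) (ZMod (p ^ (j + 1))))ˣ) :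
          Matrix (Fin (i + 1)) (Fin (i + 1)) (ZMod (p ^ (j + 1)))) *
        ((↑B : (Matrix (Fin (i + 1)) (Fin (i + 1)) (ZMod (p ^ (j + 1))))ˣ) :
          Matrix (Fin (i + 1)) (Fin (i + 1)) (ZMod (p ^ (j + 1)))) := rfl
    rw [hAB, ha, hb]
    rcases Nat.eq_zero_or_pos i with hi | hi
    · subst hi
      have hca : (p : ZMod (p ^ (j + 1))) ^ j * a = 0 := by
        have hd := A.2.1 0
        rw [ha] at hd
        simpa [Matrix.add_apply, Matrix.one_apply, Fin.last] using hd
      have hcb : (p : ZMod (p ^ (j + 1))) ^ j * b = 0 := by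
        have hd := B.2.1 0
        rw [hb] at hd
        simpa [Matrix.add_apply, Matrix.one_apply, Fin.last] using hd
      simp [mul_add, hca, hcb]
    · exact corner_mul p j i _ hi a b
  inv_mem' := by
    rintro A ⟨a, ha⟩
    refine ⟨-a, ?_⟩
    have key : ((↑A : (Matrix (Fin (i + 1)) (Fin (i + 1)) (ZMod (p ^ (j + 1))))ˣ) :
        Matrix (Fin (i + 1)) (Fin (i + 1)) (ZMod (p ^ (j + 1)))) *
        (1 + Matrix.single 0 (Fin.last i) ((p : ZMod (p ^ (j + 1))) ^ j * (-a))) =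
        1 := by
      rcases Nat.eq_zero_or_pos i with hi | hi
      · subst hi
        have hca : (p : ZMod (p ^ (j + 1))) ^ j * a = 0 := by
          have hd := A.2.1 0
          rw [ha] at hd
          simpa [Matrix.add_apply, Matrix.one_apply, Fin.last] using hd
        have hca' : (p : ZMod (p ^ (j + 1))) ^ j * (-a) = 0 := by
          rw [mul_neg, hca, neg_zero]
        rw [ha, hca, hca']
        simp
      · rw [ha, corner_mul p j i _ hi a (-a)]
        simp
    calc ((↑A⁻¹ : (Matrix (Fin (i + 1)) (Fin (i + 1)) (ZMod (p ^ (j + 1))))ˣ) :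
          Matrix (Fin (i + 1)) (Fin (i + 1)) (ZMod (p ^ (j + 1)))) =
        ((↑A⁻¹ : (Matrix (Fin (i + 1)) (Fin (i + 1)) (ZMod (p ^ (j + 1))))ˣ) :
          Matrix (Fin (i + 1)) (Fin (i + 1)) (ZMod (p ^ (j + 1)))) * 1 := (mul_one _).symm
      _ = ((↑A⁻¹ : (Matrix (Fin (i + 1)) (Fin (i + 1)) (ZMod (p ^ (j + 1))))ˣ) :
          Matrix (Fin (i + 1)) (Fin (i + 1)) (ZMod (p ^ (j + 1)))) *
          (((↑A : (Matrix (Fin (i + 1)) (Fin (i + 1)) (ZMod (p ^ (j + 1))))ˣ) :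
            Matrix (Fin (i + 1)) (Fin (i + 1)) (ZMod (p ^ (j + 1)))) *
          (1 + Matrix.single 0 (Fin.last i)
            ((p : ZMod (p ^ (j + 1))) ^ j * (-a)))) := by rw [key]
      _ = 1 + Matrix.single 0 (Fin.last i)
            ((p : ZMod (p ^ (j + 1))) ^ j * (-a)) := by
          rw [← mul_assoc, ← Units.val_mul]
          norm_cast
          rw [inv_mul_cancel]
          simp

/-- Ceiling division of natural numbers: `cdiv a b = ⌈a / b⌉` (for `b > 0`). -/
def cdiv (a b : ℕ) : ℕ := (a + b - 1) / b

/-- `jn p n i` is `j_n(i)`, the least integer `j ≥ 0` such that `i * p ^ j ≥ n`. -/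
noncomputable def jn (p n i : ℕ) : ℕ := sInf {j : ℕ | n ≤ i * p ^ j}

/-- The commutator `[g, h] = g⁻¹ h⁻¹ g h`. -/
def pcomm {H : Type*} [Group H] (g h : H) : H := g⁻¹ * h⁻¹ * g * h

/-- The lower central series of a group: `G^{(1)} = G`, `G^{(i+1)} = [G, G^{(i)}]` (with junk
value `⊤` at `0`), where `[K, K']` is the subgroup generated by the commutators. -/
def lcsD (G : Type*) [Group G] : ℕ → Subgroup G
  | 0 => ⊤
  | 1 => ⊤
  | (i + 2) => Subgroup.closure {x | ∃ k : G, ∃ k' ∈ lcsD G (i + 1), x = pcomm k k'}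

/-- The `p`-Zassenhaus filtration of a group: `G_{(n,p)}` is the subgroup generated by all
`p^j`-th powers of elements of `G^{(i)}` with `i * p^j ≥ n`. -/
def ZasD (p n : ℕ) (G : Type*) [Group G] : Subgroup G :=
  Subgroup.closure {g | ∃ i j : ℕ, 1 ≤ i ∧ n ≤ i * p ^ j ∧ ∃ h ∈ lcsD G i, g = h ^ p ^ j}

/- ===================== auxiliary lemmas ===================== -/

section ArithAux

lemma my_pow_dvd_choose {p : ℕ} (hp : p.Prime) (a t e : ℕ) (ht : 0 < t)
    (h : ∀ s, p ^ s ∣ t → s + e ≤ a) : p ^ e ∣ (p ^ a).choose t := by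
  set v := t.factorization p with hv
  have hpv : p ^ v ∣ t := Nat.ordProj_dvd t p
  have hva : v + e ≤ a := h v hpv
  obtain ⟨u, hu⟩ := hpv
  have hu_cop : ¬ p ∣ u := by
    intro hdvd
    obtain ⟨w, hw⟩ := hdvd
    have : p ^ (v + 1) ∣ t := ⟨w, by rw [hu, hw]; ring⟩
    have := (Nat.Prime.pow_dvd_iff_le_factorization hp ht.ne').mp this
    omega
  set C := (p ^ a).choose t with hC
  obtain ⟨t', rfl⟩ : ∃ t', t = t' + 1 := ⟨t - 1, by omega⟩
  have hpa : 1 ≤ p ^ a := Nat.one_le_pow _ _ hp.pos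
  obtain ⟨n', hn'⟩ : ∃ n', p ^ a = n' + 1 := ⟨p ^ a - 1, by omega⟩
  have key := Nat.add_one_mul_choose_eq n' t'
  simp only [Nat.succ_eq_add_one, ← hn'] at key
  have hdvd : p ^ a ∣ C * (t' + 1) := ⟨n'.choose t', key.symm⟩
  have hdvd2 : p ^ (a - v) ∣ C * u := by
    have h1 : p ^ (a - v) * p ^ v ∣ (C * u) * p ^ v := by
      rw [← pow_add]
      have : a - v + v = a := by omega
      rw [this, mul_assoc, mul_comm u (p ^ v), ← hu]
      exact hdvd
    exact (mul_dvd_mul_iff_right (pow_ne_zero v hp.ne_zero)).mp h1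
  have hcop : Nat.Coprime (p ^ (a - v)) u :=
    Nat.Coprime.pow_left _ ((Nat.Prime.coprime_iff_not_dvd hp).mpr hu_cop)
  exact dvd_trans (pow_dvd_pow p (by omega)) (hcop.dvd_of_dvd_mul_right hdvd2)

lemma cdiv_le_iff {a b c : ℕ} (hb : 0 < b) : cdiv a b ≤ c ↔ a ≤ c * b := by
  rw [cdiv, Nat.div_le_iff_le_mul_add_pred hb, mul_comm b c]
  omega

lemma le_cdiv_mul {a b : ℕ} (hb : 0 < b) : a ≤ cdiv a b * b :=
  (cdiv_le_iff hb).mp le_rfl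

lemma cdiv_antitone {a b b' : ℕ} (hb : 0 < b) (hbb : b ≤ b') : cdiv a b' ≤ cdiv a b := by
  rw [cdiv_le_iff (lt_of_lt_of_le hb hbb)]
  exact le_trans (le_cdiv_mul hb) (Nat.mul_le_mul_left _ hbb)

lemma jn_mem {p n i : ℕ} (hp : 2 ≤ p) (hi : 1 ≤ i) : n ≤ i * p ^ (jn p n i) := by
  have hne : {j : ℕ | n ≤ i * p ^ j}.Nonempty := by
    refine ⟨n, ?_⟩
    have h1 : n < 2 ^ n := Nat.lt_two_pow_self
    have h2 : (2:ℕ) ^ n ≤ p ^ n := Nat.pow_le_pow_left hp n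
    have : n ≤ p ^ n := by omega
    calc n ≤ p ^ n := this
    _ ≤ i * p ^ n := Nat.le_mul_of_pos_left _ hi
  exact Nat.sInf_mem hne

lemma jn_le {p n i k : ℕ} (h : n ≤ i * p ^ k) : jn p n i ≤ k := Nat.sInf_le h

lemma J_char {p n i : ℕ} (hp : 2 ≤ p) (hi : 1 ≤ i) :
    (∃ k, i = cdiv n (p ^ k)) ↔ i = cdiv n (p ^ (jn p n i)) := by
  have hppos : ∀ k : ℕ, 0 < p ^ k := fun k => Nat.pow_pos (by omega)
  constructor
  · rintro ⟨k, hk⟩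
    have hjk : jn p n i ≤ k := jn_le (by rw [hk]; exact le_cdiv_mul (hppos k))
    have hle1 : cdiv n (p ^ jn p n i) ≤ i := (cdiv_le_iff (hppos _)).mpr (jn_mem hp hi)
    have hle2 : i ≤ cdiv n (p ^ jn p n i) := by
      calc i = cdiv n (p ^ k) := hk
      _ ≤ cdiv n (p ^ jn p n i) :=
        cdiv_antitone (hppos _) (Nat.pow_le_pow_right (by omega) hjk)
    omega
  · intro h; exact ⟨_, h⟩

lemma keyA {p n i i' j j' t s : ℕ} (hp : 2 ≤ p) (hii : 1 ≤ i')
    (hn : n ≤ i' * p ^ j') (ht : 1 ≤ t) (htl : t * i' < i)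
    (hceil : (i - 1) * p ^ j < n) (hs : p ^ s ∣ t) : s + (j + 1) ≤ j' := by
  have hpt : p ^ s ≤ t := Nat.le_of_dvd (by omega) hs
  have ha1 : n * p ^ s ≤ (i - 1) * p ^ j' := by
    calc n * p ^ s ≤ n * t := Nat.mul_le_mul_left n hpt
    _ ≤ (i' * p ^ j') * t := Nat.mul_le_mul_right t hn
    _ = (t * i') * p ^ j' := by ring
    _ ≤ (i - 1) * p ^ j' := Nat.mul_le_mul_right _ (by omega)
  have ha2 : (i - 1) * p ^ (j + s) < (i - 1) * p ^ j' := by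
    calc (i - 1) * p ^ (j + s) = ((i - 1) * p ^ j) * p ^ s := by rw [pow_add]; ring
    _ < n * p ^ s := Nat.mul_lt_mul_of_lt_of_le hceil le_rfl (Nat.pow_pos (by omega))
    _ ≤ (i - 1) * p ^ j' := ha1
  have ha3 : p ^ (j + s) < p ^ j' := by
    have hi1 : 0 < i - 1 := by
      have h5 : 1 ≤ t * i' := Nat.mul_pos (by omega) (by omega)
      omega
    exact lt_of_mul_lt_mul_left ha2 (Nat.zero_le _)
  have := (Nat.pow_lt_pow_iff_right (by omega : 1 < p)).mp ha3
  omega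

lemma keyB {p n i i' j j' t s : ℕ} (hp : 2 ≤ p) (h2 : i ≤ n) (hn2 : 1 ≤ n)
    (hn : n ≤ i' * p ^ j') (ht : 1 ≤ t) (hte : t * i' = i)
    (hmin : ∀ k, n ≤ i * p ^ k → j ≤ k) (hs : p ^ s ∣ t) : s + j ≤ j' := by
  have hpt : p ^ s ≤ t := Nat.le_of_dvd (by omega) hs
  have ha1 : n * p ^ s ≤ i * p ^ j' := by
    calc n * p ^ s ≤ n * t := Nat.mul_le_mul_left n hpt
    _ ≤ (i' * p ^ j') * t := Nat.mul_le_mul_right t hn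
    _ = (t * i') * p ^ j' := by ring
    _ = i * p ^ j' := by rw [hte]
  have hsj : s ≤ j' := by
    by_contra hc
    push_neg at hc
    have hps : p ^ (j' + 1) ≤ p ^ s := Nat.pow_le_pow_right (by omega) (by omega)
    have hbig : n * (p ^ j' * p) ≤ i * p ^ j' := by
      calc n * (p ^ j' * p) = n * p ^ (j' + 1) := by rw [pow_succ]
      _ ≤ n * p ^ s := Nat.mul_le_mul_left n hps
      _ ≤ i * p ^ j' := ha1
    have hp0 : 0 < p ^ j' := Nat.pow_pos (by omega)
    have e1 : i * p ^ j' ≤ n * p ^ j' := Nat.mul_le_mul_right _ h2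
    have e2 : n * p ^ j' * 2 ≤ n * p ^ j' := by
      calc n * p ^ j' * 2 = n * (p ^ j' * 2) := by ring
      _ ≤ n * (p ^ j' * p) := Nat.mul_le_mul_left n (Nat.mul_le_mul_left _ hp)
      _ ≤ i * p ^ j' := hbig
      _ ≤ n * p ^ j' := e1
    have e3 : 0 < n * p ^ j' := Nat.mul_pos (by omega) hp0
    omega
  have h4 : n ≤ i * p ^ (j' - s) := by
    have hsplit : p ^ j' = p ^ (j' - s) * p ^ s := by rw [← pow_add]; congr 1; omega
    rw [hsplit, ← mul_assoc] at ha1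
    have hpp0 : 0 < p ^ s := Nat.pow_pos (by omega)
    exact Nat.le_of_mul_le_mul_right ha1 hpp0
  have := hmin _ h4
  omega

end ArithAux

section MSuppAux

variable {S : Type*} [CommRing S] {μ : ℕ}

/-- entries strictly below the `d`-th superdiagonal vanish -/
def MSupp (d : ℕ) (A : Matrix (Fin μ) (Fin μ) S) : Prop :=
  ∀ k l : Fin μ, (l : ℕ) < (k : ℕ) + d → A k l = 0

lemma MSupp.mono {d d' : ℕ} (h : d ≤ d') {A : Matrix (Fin μ) (Fin μ) S}
    (hA : MSupp d' A) : MSupp d A := fun k l hl => hA k l (by omega)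

lemma MSupp.add {d : ℕ} {A B : Matrix (Fin μ) (Fin μ) S} (hA : MSupp d A) (hB : MSupp d B) :
    MSupp d (A + B) := fun k l hl => by
  rw [Matrix.add_apply, hA k l hl, hB k l hl, add_zero]

lemma MSupp.neg {d : ℕ} {A : Matrix (Fin μ) (Fin μ) S} (hA : MSupp d A) :
    MSupp d (-A) := fun k l hl => by
  rw [Matrix.neg_apply, hA k l hl, neg_zero]

lemma MSupp.sub {d : ℕ} {A B : Matrix (Fin μ) (Fin μ) S} (hA : MSupp d A) (hB : MSupp d B) :
    MSupp d (A - B) := by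
  rw [sub_eq_add_neg]; exact hA.add hB.neg

lemma MSupp.zero {d : ℕ} : MSupp d (0 : Matrix (Fin μ) (Fin μ) S) := fun _ _ _ => rfl

lemma MSupp.mul {d₁ d₂ : ℕ} {A B : Matrix (Fin μ) (Fin μ) S} (hA : MSupp d₁ A)
    (hB : MSupp d₂ B) : MSupp (d₁ + d₂) (A * B) := by
  intro k l hl
  rw [Matrix.mul_apply]
  apply Finset.sum_eq_zero
  intro x _
  rcases lt_or_ge (x : ℕ) ((k : ℕ) + d₁) with h | h
  · rw [hA k x h, zero_mul]
  · rw [hB x l (by omega), mul_zero]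

lemma MSupp.pow {d t : ℕ} (ht : 1 ≤ t) {A : Matrix (Fin μ) (Fin μ) S} (hA : MSupp d A) :
    MSupp (t * d) (A ^ t) := by
  induction t with
  | zero => omega
  | succ t ih =>
    rcases Nat.eq_zero_or_pos t with h | h
    · subst h; simpa using hA
    · have hmm := (ih h).mul hA
      rw [← pow_succ] at hmm
      have heq : t * d + d = (t + 1) * d := by ring
      rw [heq] at hmm
      exact hmm

lemma MSupp.eq_zero {d : ℕ} (hd : μ ≤ d) {A : Matrix (Fin μ) (Fin μ) S} (hA : MSupp d A) :
    A = 0 := by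
  ext k l
  exact hA k l (by have := l.isLt; omega)

lemma MSupp.sum {d : ℕ} {ι : Type*} {s : Finset ι} {f : ι → Matrix (Fin μ) (Fin μ) S}
    (h : ∀ x ∈ s, MSupp d (f x)) : MSupp d (∑ x ∈ s, f x) := by
  intro k l hl
  rw [Matrix.sum_apply]
  exact Finset.sum_eq_zero fun x hx => h x hx k l hl

lemma MSupp.eq_stdBasis {i : ℕ} {A : Matrix (Fin (i+1)) (Fin (i+1)) S}
    (hA : MSupp i A) : A = Matrix.single 0 (Fin.last i) (A 0 (Fin.last i)) := by
  ext k l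
  by_cases hk : k = 0 ∧ l = Fin.last i
  · obtain ⟨rfl, rfl⟩ := hk
    simp [Matrix.single]
  · rw [Matrix.single]
    have hne : ¬((0 : Fin (i+1)) = k ∧ Fin.last i = l) := by
      intro ⟨ha, hb⟩; exact hk ⟨ha.symm, hb.symm⟩
    rw [Matrix.of_apply, if_neg hne]
    apply hA
    have hkl : (k : ℕ) ≠ 0 ∨ (l : ℕ) ≠ i := by
      by_contra hc
      push_neg at hc
      exact hk ⟨Fin.ext hc.1, Fin.ext (by simp [Fin.last, hc.2])⟩
    have := l.isLt
    have := k.isLt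
    rcases hkl with h | h
    · omega
    · omega

lemma natCast_matrix_eq (c : ℕ) :
    ((c : ℕ) : Matrix (Fin μ) (Fin μ) S) = (c : S) • (1 : Matrix (Fin μ) (Fin μ) S) := by
  rw [Matrix.smul_one_eq_diagonal, Matrix.diagonal_natCast]

lemma MSupp.natmul {d : ℕ} (c : ℕ) {A : Matrix (Fin μ) (Fin μ) S} (hA : MSupp d A) :
    MSupp d (A * (c : Matrix (Fin μ) (Fin μ) S)) := by
  intro k l hl
  rw [natCast_matrix_eq, Matrix.mul_smul, Matrix.mul_one, Matrix.smul_apply, hA k l hl, smul_zero]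

lemma natCast_matrix_entry (c : ℕ) (A : Matrix (Fin μ) (Fin μ) S) (k l : Fin μ) :
    (A * (c : Matrix (Fin μ) (Fin μ) S)) k l = (c : S) * A k l := by
  rw [natCast_matrix_eq, Matrix.mul_smul, Matrix.mul_one, Matrix.smul_apply, smul_eq_mul]

lemma neg_stdBasis (k l : Fin μ) (a : S) :
    -(Matrix.single k l a) = Matrix.single k l (-a) := by
  ext x y
  simp only [Matrix.neg_apply, Matrix.single, Matrix.of_apply]
  split <;> simp

lemma one_add_nil_pow {x : Matrix (Fin μ) (Fin μ) S} (hx : x * x = 0) (q : ℕ) :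
    (1 + x) ^ q = 1 + q • x := by
  induction q with
  | zero => simp
  | succ q ih =>
    rw [pow_succ, ih, add_mul, one_mul, mul_add, mul_one, smul_mul_assoc, hx, smul_zero,
      add_zero, succ_nsmul]
    abel

end MSuppAux

section GroupAux

variable {S : Type*} [CommRing S] {μ : ℕ}

/-- the underlying matrix of an element of the unitriangular group -/
def matOf (u : ↥(UT S μ)) : Matrix (Fin μ) (Fin μ) S :=
  ((u : (Matrix (Fin μ) (Fin μ) S)ˣ) : Matrix (Fin μ) (Fin μ) S)

lemma matOf_mul (u v : ↥(UT S μ)) : matOf (u * v) = matOf u * matOf v := rfl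

lemma matOf_one : matOf (1 : ↥(UT S μ)) = 1 := rfl

lemma matOf_pow (u : ↥(UT S μ)) (q : ℕ) : matOf (u ^ q) = (matOf u) ^ q := by
  induction q with
  | zero => simp [pow_zero, matOf_one]
  | succ q ih => rw [pow_succ, pow_succ, matOf_mul, ih]

lemma UT_sub_one (u : ↥(UT S μ)) : MSupp 1 (matOf u - 1) := by
  intro k l hl
  simp only [matOf]
  rw [Matrix.sub_apply]
  rcases eq_or_lt_of_le (Nat.lt_succ_iff.mp hl) with h | h
  · have : l = k := Fin.ext h
    subst this
    rw [u.2.1 l, Matrix.one_apply_eq, sub_self]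
  · have hlk : l < k := Fin.lt_def.mpr h
    rw [u.2.2 k l hlk, Matrix.one_apply_ne (Fin.ne_of_lt hlk).symm]
    ring

lemma UTk_sub_one {d : ℕ} (hd : 1 ≤ d) {u : ↥(UT S μ)} (hu : u ∈ UTk S μ d) :
    MSupp d (matOf u - 1) := by
  intro k l hl
  simp only [matOf]
  rcases lt_trichotomy ((k : ℕ)) ((l : ℕ)) with h | h | h
  · rw [Matrix.sub_apply, hu k l (Fin.lt_def.mpr h) (by omega),
      Matrix.one_apply_ne (Fin.ne_of_lt (Fin.lt_def.mpr h)), sub_zero]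
  · have : l = k := Fin.ext h.symm
    subst this
    rw [Matrix.sub_apply, u.2.1 l, Matrix.one_apply_eq, sub_self]
  · have hlk : l < k := Fin.lt_def.mpr h
    rw [Matrix.sub_apply, u.2.2 k l hlk, Matrix.one_apply_ne (Fin.ne_of_lt hlk).symm]
    ring

lemma mem_UTk_of_MSupp {d : ℕ} {u : ↥(UT S μ)} (h : MSupp d (matOf u - 1)) :
    u ∈ UTk S μ d := by
  intro k l hkl hld
  have h2 := h k l hld
  simp only [matOf] at h2
  rw [Matrix.sub_apply, Matrix.one_apply_ne (Fin.ne_of_lt hkl), sub_zero] at h2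
  exact h2

lemma pcomm_mem_UTk {d : ℕ} (hd : 1 ≤ d) (g : ↥(UT S μ)) {h : ↥(UT S μ)}
    (hh : h ∈ UTk S μ d) : pcomm g h ∈ UTk S μ (d + 1) := by
  set a := matOf g with hA
  set b := matOf h with hB
  set a' := matOf g⁻¹ with hA'
  set b' := matOf h⁻¹ with hB'
  have haa : a' * a = 1 := by rw [hA, hA', ← matOf_mul, inv_mul_cancel g, matOf_one]
  have hbb : b' * b = 1 := by rw [hB, hB', ← matOf_mul, inv_mul_cancel h, matOf_one]
  have hcm : matOf (pcomm g h) = a' * b' * a * b := by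
    rw [pcomm, matOf_mul, matOf_mul, matOf_mul]
  have h1 : MSupp 1 (a - 1) := UT_sub_one g
  have h1' : MSupp 1 (a' * b' - 1) := by
    have := UT_sub_one (g⁻¹ * h⁻¹)
    rwa [matOf_mul] at this
  have hbs : MSupp d (b - 1) := UTk_sub_one hd hh
  have hab : MSupp (d + 1) (a * b - b * a) := by
    have hid : a * b - b * a = (a - 1) * (b - 1) - (b - 1) * (a - 1) := by noncomm_ring
    rw [hid]
    have m1 : MSupp (1 + d) ((a - 1) * (b - 1)) := h1.mul hbs
    have m2 : MSupp (d + 1) ((b - 1) * (a - 1)) := hbs.mul h1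
    rw [add_comm 1 d] at m1
    exact m1.sub m2
  have key : matOf (pcomm g h) - 1 = (a' * b' - 1) * (a * b - b * a) + (a * b - b * a) := by
    rw [hcm]
    have e1 : a' * b' * a * b - 1 = a' * b' * (a * b - b * a) + (a' * (b' * b) * a - 1) := by
      noncomm_ring
    rw [e1, hbb, mul_one, haa, sub_self, add_zero]
    noncomm_ring
  apply mem_UTk_of_MSupp
  rw [key]
  have m3 : MSupp (1 + (d + 1)) ((a' * b' - 1) * (a * b - b * a)) := h1'.mul hab
  exact (m3.mono (by omega)).add hab

lemma lcsD_le_UTk : ∀ d : ℕ, 1 ≤ d → lcsD ↥(UT S μ) d ≤ UTk S μ d := by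
  have main : ∀ e : ℕ, lcsD ↥(UT S μ) (e + 1) ≤ UTk S μ (e + 1) := by
    intro e
    induction e with
    | zero =>
      intro x _ k l hkl hlt
      omega
    | succ e ih =>
      show lcsD ↥(UT S μ) (e + 2) ≤ UTk S μ (e + 2)
      rw [lcsD]
      apply (Subgroup.closure_le _).mpr
      rintro x ⟨g, h, hh, rfl⟩
      exact pcomm_mem_UTk (by omega) g (ih hh)
  intro d hd
  obtain ⟨e, rfl⟩ : ∃ e, d = e + 1 := ⟨d - 1, by omega⟩
  exact main e

/-- the unit `1 + a E_{kl}` for `l ≠ k` -/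
def eUnit (k l : Fin μ) (h : l ≠ k) (a : S) : (Matrix (Fin μ) (Fin μ) S)ˣ where
  val := 1 + Matrix.single k l a
  inv := 1 - Matrix.single k l a
  val_inv := by
    have hE : Matrix.single k l a * Matrix.single k l a = 0 :=
      Matrix.single_mul_single_of_ne a k l k h a
    have : (1 + Matrix.single k l a) * (1 - Matrix.single k l a) =
        1 - Matrix.single k l a * Matrix.single k l a := by noncomm_ring
    rw [this, hE, sub_zero]
  inv_val := by
    have hE : Matrix.single k l a * Matrix.single k l a = 0 :=
      Matrix.single_mul_single_of_ne a k l k h a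
    have : (1 - Matrix.single k l a) * (1 + Matrix.single k l a) =
        1 - Matrix.single k l a * Matrix.single k l a := by noncomm_ring
    rw [this, hE, sub_zero]

lemma eUnit_mem_UT (k l : Fin μ) (hkl : k < l) (a : S) :
    eUnit k l (ne_of_gt hkl) a ∈ UT S μ := by
  constructor
  · intro x
    show (1 + Matrix.single k l a) x x = 1
    rw [Matrix.add_apply, Matrix.one_apply_eq, Matrix.single, Matrix.of_apply]
    rw [if_neg, add_zero]
    rintro ⟨rfl, rfl⟩
    exact absurd hkl (lt_irrefl _)
  · intro x y hyx
    show (1 + Matrix.single k l a) x y = 0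
    rw [Matrix.add_apply, Matrix.one_apply_ne (Fin.ne_of_gt hyx),
      Matrix.single, Matrix.of_apply, if_neg, add_zero]
    rintro ⟨rfl, rfl⟩
    exact absurd (hkl.trans hyx) (lt_irrefl _)

/-- the element `1 + a E_{kl}` of the unitriangular group -/
def eElt (k l : Fin μ) (h : k < l) (a : S) : ↥(UT S μ) :=
  ⟨eUnit k l (ne_of_gt h) a, eUnit_mem_UT k l h a⟩

lemma matOf_eElt (k l : Fin μ) (h : k < l) (a : S) :
    matOf (eElt k l h a) = 1 + Matrix.single k l a := rfl

lemma matOf_eElt_inv (k l : Fin μ) (h : k < l) (a : S) :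
    matOf (eElt k l h a)⁻¹ = 1 - Matrix.single k l a := rfl

/-- the commutator matrix identity `[1+yE_{bc}, 1+xE_{ab}] = 1 - xy E_{ac}` -/
lemma comm_matrix_id {a0 b c : Fin μ} (hab : b ≠ a0) (hbc : c ≠ b) (hac : c ≠ a0) (x y : S) :
    (1 - Matrix.single b c y) * (1 - Matrix.single a0 b x) *
      (1 + Matrix.single b c y) * (1 + Matrix.single a0 b x) =
      1 - Matrix.single a0 c (x * y) := by
  set X := Matrix.single a0 b x with hX
  set Y := Matrix.single b c y with hY
  have eXY : X * Y = Matrix.single a0 c (x * y) := Matrix.single_mul_single_same x a0 b c y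
  have eYX : Y * X = 0 := Matrix.single_mul_single_of_ne y b c a0 hac x
  have eXX : X * X = 0 := Matrix.single_mul_single_of_ne x a0 b a0 hab x
  have eYY : Y * Y = 0 := Matrix.single_mul_single_of_ne y b c b hbc y
  have h1 : (1 - Y) * (1 - X) = 1 - X - Y + Y * X := by noncomm_ring
  have h2 : (1 + Y) * (1 + X) = 1 + X + Y + Y * X := by noncomm_ring
  have h3 : (1 - X - Y) * (1 + X + Y) = 1 - X * X - X * Y - Y * X - Y * Y := by noncomm_ring
  calc (1 - Y) * (1 - X) * (1 + Y) * (1 + X)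
      = ((1 - Y) * (1 - X)) * ((1 + Y) * (1 + X)) := by rw [mul_assoc]
    _ = (1 - X - Y) * (1 + X + Y) := by rw [h1, h2, eYX, add_zero, add_zero]
    _ = 1 - X * X - X * Y - Y * X - Y * Y := h3
    _ = 1 - Matrix.single a0 c (x * y) := by
        rw [eXX, eXY, eYX, eYY, sub_zero, sub_zero, sub_zero]

lemma stdBasis_mem_lcsD {i : ℕ} (d : ℕ) (hd : 1 ≤ d) (hdi : d ≤ i) (a : S)
    (c : Fin (i+1)) (hc : (c : ℕ) = d) (hlt : (0 : Fin (i+1)) < c) :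
    eElt 0 c hlt a ∈ lcsD ↥(UT S (i+1)) d := by
  induction d generalizing a c with
  | zero => omega
  | succ e ih =>
    rcases Nat.eq_zero_or_pos e with he | he
    · subst he
      show _ ∈ lcsD ↥(UT S (i+1)) 1
      rw [lcsD]
      trivial
    · -- e ≥ 1, d = e + 1 ≥ 2
      obtain ⟨f, rfl⟩ : ∃ f, e = f + 1 := ⟨e - 1, by omega⟩
      show _ ∈ lcsD ↥(UT S (i+1)) (f + 2)
      rw [lcsD]
      -- indices
      have hfi : f + 2 ≤ i + 1 := by omega
      set b : Fin (i+1) := ⟨f + 1, by omega⟩ with hb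
      have hbc : b < c := by rw [Fin.lt_def]; show f + 1 < (c:ℕ); omega
      have h0b : (0 : Fin (i+1)) < b := by rw [Fin.lt_def]; simp [hb]
      set g : ↥(UT S (i+1)) := eElt b c hbc 1 with hg
      set h : ↥(UT S (i+1)) := eElt 0 b h0b (-a) with hh
      have hmemh : h ∈ lcsD ↥(UT S (i+1)) (f + 1) := ih (by omega) (by omega) (-a) b rfl h0b
      have heq : eElt 0 c hlt a = pcomm g h := by
        apply Subtype.ext
        apply Units.ext
        show matOf (eElt 0 c hlt a) = matOf (pcomm g h)
        have hpc : matOf (pcomm g h) = matOf g⁻¹ * matOf h⁻¹ * matOf g * matOf h := by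
          rw [pcomm, matOf_mul, matOf_mul, matOf_mul]
        rw [hpc, hg, hh]
        simp only [matOf_eElt, matOf_eElt_inv]
        have hba : b ≠ (0 : Fin (i+1)) := ne_of_gt h0b
        have hcb : c ≠ b := ne_of_gt hbc
        have hca : c ≠ (0 : Fin (i+1)) := ne_of_gt hlt
        rw [comm_matrix_id hba hcb hca (-a) 1]
        rw [show (-a) * 1 = -a by ring, ← neg_stdBasis, sub_neg_eq_add]
      rw [heq]
      exact Subgroup.subset_closure ⟨g, h, hmemh, rfl⟩

end GroupAux

section PowCorner

lemma pow_corner {p i j i' q : ℕ} (hi : 1 ≤ i) (hi' : 1 ≤ i')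
    {N : Matrix (Fin (i+1)) (Fin (i+1)) (ZMod (p^(j+1)))} (hN : MSupp i' N)
    (hA : ∀ t, 1 ≤ t → t * i' < i → ((q.choose t : ℕ) : ZMod (p^(j+1))) = 0)
    (hB : ∀ t, 1 ≤ t → t * i' = i →
      ((p : ZMod (p^(j+1))) ^ j ∣ ((q.choose t : ℕ) : ZMod (p^(j+1))))) :
    ∃ a, (1 + N) ^ q =
      1 + Matrix.single 0 (Fin.last i) ((p : ZMod (p^(j+1))) ^ j * a) := by
  have hexp := (Commute.one_right N).add_pow q
  set F : ℕ → Matrix (Fin (i+1)) (Fin (i+1)) (ZMod (p^(j+1))) :=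
    fun t => N ^ t * ((q.choose t : ℕ) : Matrix (Fin (i+1)) (Fin (i+1)) (ZMod (p^(j+1)))) with hF
  have hsum : (1 + N) ^ q = ∑ t ∈ Finset.range (q+1), F t := by
    rw [add_comm 1 N, hexp]
    apply Finset.sum_congr rfl
    intro t _
    rw [hF, one_pow, mul_one]
  set D := ∑ t ∈ Finset.range q, F (t+1) with hD
  have hsplit : (1 + N) ^ q = 1 + D := by
    rw [hsum, Finset.sum_range_succ']
    have hF0 : F 0 = 1 := by rw [hF]; simp
    rw [hF0, ← hD]; exact add_comm D 1
  have hterm : ∀ t : ℕ, MSupp i (F (t+1)) ∧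
      ((p : ZMod (p^(j+1))) ^ j ∣ (F (t+1)) 0 (Fin.last i)) := by
    intro t
    rcases lt_trichotomy ((t+1) * i') i with hlt | heq | hgt
    · have hzero : F (t+1) = 0 := by
        rw [hF]
        show N ^ (t+1) * _ = 0
        rw [natCast_matrix_eq, hA (t+1) (by omega) hlt, zero_smul, mul_zero]
      rw [hzero]
      exact ⟨MSupp.zero, by simp⟩
    · constructor
      · have := (hN.pow (show 1 ≤ t + 1 by omega)).natmul (q.choose (t+1))
        rw [heq] at this
        exact this
      · show (p : ZMod (p^(j+1))) ^ j ∣ (N ^ (t+1) *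
          ((q.choose (t+1) : ℕ) : Matrix (Fin (i+1)) (Fin (i+1)) (ZMod (p^(j+1))))) 0 (Fin.last i)
        rw [natCast_matrix_entry]
        exact Dvd.dvd.mul_right (hB (t+1) (by omega) heq) _
    · have hNz : N ^ (t+1) = 0 :=
        (hN.pow (show 1 ≤ t + 1 by omega)).eq_zero (by
          have : (t+1) * i' ≥ i + 1 := by omega
          omega)
      have hzero : F (t+1) = 0 := by rw [hF]; show N ^ (t+1) * _ = 0; rw [hNz, zero_mul]
      rw [hzero]
      exact ⟨MSupp.zero, by simp⟩
  have hDsupp : MSupp i D := MSupp.sum (fun t _ => (hterm t).1)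
  have hDdvd : (p : ZMod (p^(j+1))) ^ j ∣ D 0 (Fin.last i) := by
    rw [hD, Matrix.sum_apply]
    exact Finset.dvd_sum (fun t _ => (hterm t).2)
  obtain ⟨a, ha⟩ := hDdvd
  refine ⟨a, ?_⟩
  rw [hsplit, hDsupp.eq_stdBasis, ha]

end PowCorner

/-- Let `p` be a prime, `n ≥ 2`, `1 ≤ i ≤ n`, `j = j_n(i)`, and `U = U_i(ℤ/p^{j+1})` the group of
unitriangular `(i+1) × (i+1)` matrices over `ℤ/p^{j+1}`.  Then the `p`-Zassenhaus subgroup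
`U_{(n,p)}` equals `I + p^j (ℤ/p^{j+1}) E_{1,i+1}` (a group isomorphic to `ℤ/p`) if and only if
`i ∈ J(n)`, i.e. iff `i = ⌈n / p^k⌉` for some `k ≥ 0`. -/
theorem stmt_11 (p n i : ℕ) (hp : p.Prime) (hn : 2 ≤ n) (h1 : 1 ≤ i) (h2 : i ≤ n) :
    ZasD p n ↥(UT (ZMod (p ^ (jn p n i + 1))) (i + 1)) = cornerSub p (jn p n i) i ↔
      ∃ k : ℕ, i = cdiv n (p ^ k) := by
  have hp2 := hp.two_le
  set j := jn p n i with hjdef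
  have hjmem : n ≤ i * p ^ j := by rw [hjdef]; exact jn_mem hp2 h1
  have hppos : ∀ k : ℕ, 0 < p ^ k := fun k => Nat.pow_pos (by omega)
  have hpjne : ((p : ZMod (p^(j+1)))) ^ j ≠ 0 := by
    intro h0
    have hc1 : (((p^j : ℕ)) : ZMod (p^(j+1))) = 0 := by push_cast; exact h0
    rw [ZMod.natCast_eq_zero_iff] at hc1
    have hc2 := Nat.le_of_dvd (hppos j) hc1
    have hc3 : p ^ j < p ^ (j+1) := Nat.pow_lt_pow_right (by omega) (Nat.lt_succ_self j)
    omega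
  rw [J_char hp2 h1, ← hjdef]
  constructor
  · intro hZ
    by_contra hne
    set i0 := cdiv n (p ^ j) with hi0def
    have hi0le : i0 ≤ i := (cdiv_le_iff (hppos j)).mpr hjmem
    have hi0lt : i0 < i := lt_of_le_of_ne hi0le (fun hh => hne hh.symm)
    have hi0pos : 1 ≤ i0 := by
      by_contra hc
      push_neg at hc
      have : n ≤ 0 * p ^ j := (cdiv_le_iff (hppos j)).mp (by omega)
      simp at this
      omega
    have hi0n : n ≤ i0 * p ^ j := le_cdiv_mul (hppos j)
    set ci : Fin (i+1) := ⟨i0, by omega⟩ with hcidef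
    have hlt0 : (0 : Fin (i+1)) < ci := by
      rw [Fin.lt_def]
      show (0 : ℕ) < i0
      omega
    set h0 : ↥(UT (ZMod (p^(j+1))) (i+1)) := eElt 0 ci hlt0 1 with hh0
    have hmemZ : h0 ^ (p ^ j) ∈ ZasD p n ↥(UT (ZMod (p^(j+1))) (i+1)) := by
      apply Subgroup.subset_closure
      exact ⟨i0, j, hi0pos, hi0n, h0,
        stdBasis_mem_lcsD i0 hi0pos (by omega) 1 ci rfl hlt0, rfl⟩
    rw [hZ] at hmemZ
    obtain ⟨a, ha⟩ := hmemZ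
    have ha' : matOf (h0 ^ (p ^ j)) =
        1 + Matrix.single 0 (Fin.last i) ((p : ZMod (p^(j+1))) ^ j * a) := ha
    have hsq : Matrix.single (0 : Fin (i+1)) ci (1 : ZMod (p^(j+1))) *
        Matrix.single 0 ci 1 = 0 :=
      Matrix.single_mul_single_of_ne 1 0 ci 0 (ne_of_gt hlt0) 1
    have hmat : matOf (h0 ^ (p ^ j)) =
        1 + Matrix.single 0 ci ((p ^ j : ℕ) • (1 : ZMod (p^(j+1)))) := by
      rw [matOf_pow, hh0, matOf_eElt, one_add_nil_pow hsq, Matrix.smul_single]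
    have hent := congrFun (congrFun (hmat.symm.trans ha') 0) ci
    have hci_ne : (0 : Fin (i+1)) ≠ ci := ne_of_lt hlt0
    have hlast_ne : ¬((0 : Fin (i+1)) = 0 ∧ Fin.last i = ci) := by
      rintro ⟨-, hcl⟩
      have : (Fin.last i : ℕ) = (ci : ℕ) := by rw [hcl]
      simp [Fin.last, hcidef] at this
      omega
    rw [Matrix.add_apply, Matrix.add_apply, Matrix.one_apply_ne hci_ne,
      Matrix.single_apply_same,
      Matrix.single, Matrix.of_apply, if_neg hlast_ne] at hent
    apply hpjne
    have : ((p ^ j : ℕ) : ZMod (p^(j+1))) = 0 := by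
      have := hent
      simpa [nsmul_eq_mul] using this
    push_cast at this
    exact this
  · intro hcd
    have hceil : (i - 1) * p ^ j < n := by
      by_contra hc
      push_neg at hc
      have hle : cdiv n (p ^ j) ≤ i - 1 := (cdiv_le_iff (hppos j)).mpr hc
      rw [← hcd] at hle
      omega
    apply le_antisymm
    · apply (Subgroup.closure_le _).mpr
      rintro g ⟨i', j', hi'1, hn', h, hh, rfl⟩
      have hUTk : h ∈ UTk (ZMod (p^(j+1))) (i+1) i' := lcsD_le_UTk i' hi'1 hh
      have hNsupp : MSupp i' (matOf h - 1) := UTk_sub_one hi'1 hUTk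
      have hA : ∀ t, 1 ≤ t → t * i' < i →
          (((p^j').choose t : ℕ) : ZMod (p^(j+1))) = 0 := by
        intro t ht htl
        rw [ZMod.natCast_eq_zero_iff]
        exact my_pow_dvd_choose hp j' t (j+1) (by omega)
          (fun s hs => keyA hp2 hi'1 hn' ht htl hceil hs)
      have hB : ∀ t, 1 ≤ t → t * i' = i →
          ((p : ZMod (p^(j+1))) ^ j ∣ (((p^j').choose t : ℕ) : ZMod (p^(j+1)))) := by
        intro t ht hte
        have hd : p ^ j ∣ (p^j').choose t := my_pow_dvd_choose hp j' t j (by omega)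
          (fun s hs => keyB hp2 h2 (by omega) hn' ht hte
            (fun k hk => by rw [hjdef]; exact jn_le hk) hs)
        obtain ⟨b, hb⟩ := hd
        exact ⟨(b : ZMod (p^(j+1))), by rw [hb]; push_cast; ring⟩
      obtain ⟨a, ha⟩ := pow_corner h1 hi'1 hNsupp hA hB
      show h ^ p ^ j' ∈ cornerSub p j i
      refine ⟨a, ?_⟩
      show matOf (h ^ p ^ j') = _
      rw [matOf_pow, show matOf h = 1 + (matOf h - 1) by abel, ha]
    · rintro M ⟨a, ha⟩
      have hlast : (0 : Fin (i+1)) < Fin.last i := by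
        rw [Fin.lt_def]
        show (0 : ℕ) < (Fin.last i : ℕ)
        simp [Fin.last]
        omega
      set h0 := eElt (0 : Fin (i+1)) (Fin.last i) hlast a with hh0
      have ha' : matOf M =
          1 + Matrix.single 0 (Fin.last i) ((p : ZMod (p^(j+1))) ^ j * a) := ha
      have hsq : Matrix.single (0 : Fin (i+1)) (Fin.last i) a *
          Matrix.single 0 (Fin.last i) a = 0 :=
        Matrix.single_mul_single_of_ne a 0 (Fin.last i) 0 (ne_of_gt hlast) a
      have hMeq : M = h0 ^ (p ^ j) := by
        apply Subtype.ext
        apply Units.ext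
        show matOf M = matOf (h0 ^ (p ^ j))
        rw [matOf_pow, hh0, matOf_eElt, one_add_nil_pow hsq, Matrix.smul_single, ha']
        congr 1
        congr 1
        rw [nsmul_eq_mul]
        push_cast
        ring
      rw [hMeq]
      exact Subgroup.subset_closure ⟨i, j, h1, hjmem, h0,
        stdBasis_mem_lcsD i h1 le_rfl a (Fin.last i) (by simp [Fin.last]) hlast, rfl⟩
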